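/- Fix d ≥ 1. The ℓ0 pseudonorm is equal to its Capra biconjugate (hence is Capra-convex): for every x ∈ ℝ^d, sup_{y ∈ ℝ^d} ( ¢(x,y) − max_{l ∈ {0,1,…,d}} ( ‖y‖_(l) − l ) ) = ℓ0(x). -/

import Mathlib

/-!
Let `S` be the support of `x ≠ 0`. Since `x = x_S`, Cauchy–Schwarz gives
`¢(x,y) = ⟨x, y_S⟩ / ‖x‖ ≤ ‖y_S‖ ≤ ‖y‖_(ℓ₀ x)`, so every term of the supremum is at most
`‖y‖_(ℓ₀ x) − (‖y‖_(ℓ₀ x) − ℓ₀ x) = ℓ₀ x`.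

Conversely take `y = t x` with `t ≥ 0`, so that `¢(x, tx) = t‖x‖`. For `l ≥ ℓ₀ x` we have
`‖tx‖_(l) − l ≤ t‖x‖ − ℓ₀ x`. For `l < ℓ₀ x` every `K` with `|K| ≤ l` misses a nonzero
coordinate of `x`, so `‖x‖_(l) < ‖x‖`, and the same bound holds once `t` is large.
-/

noncomputable section

variable {d : ℕ}

/-- The projection `x_K` of `x` onto the coordinates in `K`
(the components outside `K` vanish). -/
def restr (K : Finset (Fin d)) (x : EuclideanSpace ℝ (Fin d)) : EuclideanSpace ℝ (Fin d) :=
  WithLp.toLp 2 (fun i => if i ∈ K then x i else 0)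

/-- The 2-k-symmetric gauge norm `‖y‖_(k) = sup {‖y_K‖ : |K| ≤ k}`
(equal to `0` for `k = 0`, by the convention `‖·‖_(0) = 0`). -/
def gaugeNorm (k : ℕ) (y : EuclideanSpace ℝ (Fin d)) : ℝ :=
  ⨆ K : {K : Finset (Fin d) // K.card ≤ k}, ‖restr (K : Finset (Fin d)) y‖

/-- The ℓ₀ pseudonorm: the number of nonzero components. -/
def l0 (x : EuclideanSpace ℝ (Fin d)) : ℕ :=
  (Finset.univ.filter fun i => x i ≠ 0).card

open Classical in
/-- The Capra coupling `¢(x,y) = ⟨x,y⟩ / ‖x‖` for `x ≠ 0`, and `¢(0,y) = 0`. -/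
def capra (x y : EuclideanSpace ℝ (Fin d)) : ℝ :=
  if x = 0 then 0 else (inner ℝ x y : ℝ) / ‖x‖

/-- The Capra conjugate of ℓ₀: `y ↦ max_{0 ≤ l ≤ d} (‖y‖_(l) − l)`. -/
def capraConjL0 (y : EuclideanSpace ℝ (Fin d)) : ℝ :=
  ⨆ l : Fin (d + 1), (gaugeNorm (l : ℕ) y - ((l : ℕ) : ℝ))

/-- `L₀(x) = sup_y (⟨x,y⟩ − max_{0 ≤ l ≤ d}(‖y‖_(l) − l))`, with values in `ℝ̄ = EReal`. -/
def L0 (x : EuclideanSpace ℝ (Fin d)) : EReal :=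
  ⨆ y : EuclideanSpace ℝ (Fin d), (((inner ℝ x y : ℝ) - capraConjL0 y : ℝ) : EReal)

/-- The k-support norm: the dual norm of the 2-k-symmetric gauge norm,
`‖y‖^sp_(k) = sup {⟨x,y⟩ : ‖x‖_(k) ≤ 1}`. -/
def suppNorm (k : ℕ) (y : EuclideanSpace ℝ (Fin d)) : ℝ :=
  sSup {c : ℝ | ∃ x : EuclideanSpace ℝ (Fin d), gaugeNorm k x ≤ 1 ∧ c = (inner ℝ x y : ℝ)}

/-- The unit ball of the k-support norm, with the convention `B^sp_(0) = {0}`. -/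
def Bsp (d k : ℕ) : Set (EuclideanSpace ℝ (Fin d)) :=
  if k = 0 then {0} else {y | suppNorm k y ≤ 1}

/-- The degenerate unit sphere `S_K = {x : x_{−K} = 0 and ‖x_K‖ = 1}`. -/
def sphK (K : Finset (Fin d)) : Set (EuclideanSpace ℝ (Fin d)) :=
  {x | (∀ i, i ∉ K → x i = 0) ∧ ‖restr K x‖ = 1}

/-- The degenerate unit ball `B_K = {x : x_{−K} = 0 and ‖x_K‖ ≤ 1}`. -/
def ballK (K : Finset (Fin d)) : Set (EuclideanSpace ℝ (Fin d)) :=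
  {x | (∀ i, i ∉ K → x i = 0) ∧ ‖restr K x‖ ≤ 1}

lemma restr_smul (K : Finset (Fin d)) (t : ℝ) (y : EuclideanSpace ℝ (Fin d)) :
    restr K (t • y) = t • restr K y := by
  ext i
  by_cases hi : i ∈ K <;> simp [restr, hi]

lemma norm_restr_sq (K : Finset (Fin d)) (y : EuclideanSpace ℝ (Fin d)) :
    ‖restr K y‖ ^ 2 = ∑ i ∈ K, y i ^ 2 := by
  simp [EuclideanSpace.real_norm_sq_eq, restr, apply_ite (fun a : ℝ => a ^ 2), Finset.sum_ite_mem]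

lemma norm_restr_le (K : Finset (Fin d)) (y : EuclideanSpace ℝ (Fin d)) :
    ‖restr K y‖ ≤ ‖y‖ := by
  rw [← sq_le_sq₀ (norm_nonneg _) (norm_nonneg _), norm_restr_sq, EuclideanSpace.real_norm_sq_eq]
  exact Finset.sum_le_sum_of_subset_of_nonneg (Finset.subset_univ K) fun i _ _ => sq_nonneg _

lemma norm_restr_lt {K : Finset (Fin d)} {y : EuclideanSpace ℝ (Fin d)} {j : Fin d}
    (hj : y j ≠ 0) (hjK : j ∉ K) : ‖restr K y‖ < ‖y‖ := by
  rw [← sq_lt_sq₀ (norm_nonneg _) (norm_nonneg _), norm_restr_sq, EuclideanSpace.real_norm_sq_eq]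
  exact Finset.sum_lt_sum_of_subset (Finset.subset_univ K) (Finset.mem_univ j) hjK
    (by positivity) fun i _ _ => sq_nonneg _

lemma inner_restr_support (x y : EuclideanSpace ℝ (Fin d)) :
    inner ℝ x (restr (Finset.univ.filter fun i => x i ≠ 0) y) = inner ℝ x y := by
  simp only [PiLp.inner_apply, RCLike.inner_apply, conj_trivial]
  refine Finset.sum_congr rfl fun i _ => ?_
  by_cases h : x i = 0 <;> simp [restr, h]

instance (k : ℕ) : Nonempty {K : Finset (Fin d) // K.card ≤ k} := ⟨⟨∅, by simp⟩⟩

lemma norm_restr_le_gaugeNorm {K : Finset (Fin d)} {k : ℕ} (hK : K.card ≤ k)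
    (y : EuclideanSpace ℝ (Fin d)) : ‖restr K y‖ ≤ gaugeNorm k y :=
  le_ciSup (f := fun K : {K : Finset (Fin d) // K.card ≤ k} => ‖restr (K : Finset (Fin d)) y‖)
    (Set.finite_range _).bddAbove ⟨K, hK⟩

lemma gaugeNorm_nonneg (k : ℕ) (y : EuclideanSpace ℝ (Fin d)) : 0 ≤ gaugeNorm k y :=
  (norm_nonneg _).trans (norm_restr_le_gaugeNorm (K := ∅) (Nat.zero_le k) y)

lemma gaugeNorm_le_norm (k : ℕ) (y : EuclideanSpace ℝ (Fin d)) : gaugeNorm k y ≤ ‖y‖ :=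
  ciSup_le fun _ => norm_restr_le _ y

lemma gaugeNorm_smul {t : ℝ} (ht : 0 ≤ t) (k : ℕ) (y : EuclideanSpace ℝ (Fin d)) :
    gaugeNorm k (t • y) = t * gaugeNorm k y := by
  simp only [gaugeNorm, restr_smul, norm_smul, Real.norm_of_nonneg ht,
    Real.mul_iSup_of_nonneg ht]

lemma gaugeNorm_lt_norm {k : ℕ} {y : EuclideanSpace ℝ (Fin d)} (hk : k < l0 y) :
    gaugeNorm k y < ‖y‖ := by
  obtain ⟨⟨K, hK⟩, hmax⟩ := exists_eq_ciSup_of_finite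
    (f := fun K : {K : Finset (Fin d) // K.card ≤ k} => ‖restr (K : Finset (Fin d)) y‖)
  obtain ⟨j, hj, hjK⟩ := Finset.exists_mem_notMem_of_card_lt_card (hK.trans_lt hk)
  rw [gaugeNorm, ← hmax]
  exact norm_restr_lt (Finset.mem_filter.mp hj).2 hjK

lemma capra_le_gaugeNorm_l0 (x y : EuclideanSpace ℝ (Fin d)) :
    capra x y ≤ gaugeNorm (l0 x) y := by
  by_cases hx : x = 0
  · simpa [capra, hx] using gaugeNorm_nonneg _ y
  rw [capra, if_neg hx, div_le_iff₀ (norm_pos_iff.mpr hx), ← inner_restr_support]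
  calc inner ℝ x (restr _ y) ≤ ‖x‖ * ‖restr _ y‖ := real_inner_le_norm _ _
    _ ≤ ‖x‖ * gaugeNorm (l0 x) y :=
      mul_le_mul_of_nonneg_left (norm_restr_le_gaugeNorm le_rfl y) (norm_nonneg x)
    _ = gaugeNorm (l0 x) y * ‖x‖ := mul_comm _ _

lemma capra_smul_self (t : ℝ) (x : EuclideanSpace ℝ (Fin d)) :
    capra x (t • x) = t * ‖x‖ := by
  by_cases hx : x = 0
  · simp [capra, hx]
  rw [capra, if_neg hx, real_inner_smul_right, real_inner_self_eq_norm_sq]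
  field_simp [norm_ne_zero_iff.mpr hx]

lemma l0_le (x : EuclideanSpace ℝ (Fin d)) : l0 x ≤ d :=
  (Finset.card_le_univ _).trans_eq (Fintype.card_fin d)

lemma le_capraConjL0 (y : EuclideanSpace ℝ (Fin d)) {l : ℕ} (hl : l ≤ d) :
    gaugeNorm l y - l ≤ capraConjL0 y :=
  le_ciSup (f := fun l : Fin (d + 1) => gaugeNorm (l : ℕ) y - ((l : ℕ) : ℝ))
    (Set.finite_range _).bddAbove ⟨l, Nat.lt_succ_of_le hl⟩

lemma capraConjL0_le {y : EuclideanSpace ℝ (Fin d)} {c : ℝ}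
    (h : ∀ l ≤ d, gaugeNorm l y - l ≤ c) : capraConjL0 y ≤ c :=
  ciSup_le fun l => h l (Nat.lt_succ_iff.mp l.2)

lemma capra_sub_capraConjL0_le (x y : EuclideanSpace ℝ (Fin d)) :
    capra x y - capraConjL0 y ≤ l0 x := by
  linarith [capra_le_gaugeNorm_l0 x y, le_capraConjL0 y (l0_le x)]

lemma exists_l0_le_capra_sub_capraConjL0 (x : EuclideanSpace ℝ (Fin d)) :
    ∃ y, (l0 x : ℝ) ≤ capra x y - capraConjL0 y := by
  have large : ∀ᶠ t in Filter.atTop, 0 ≤ t ∧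
      ∀ l : Fin (l0 x), (l0 x : ℝ) ≤ t * (‖x‖ - gaugeNorm l x) := by
    refine (Filter.eventually_ge_atTop 0).and (Filter.eventually_all.mpr fun l => ?_)
    have hgap : 0 < ‖x‖ - gaugeNorm l x := sub_pos.mpr (gaugeNorm_lt_norm l.2)
    exact (Filter.tendsto_id.atTop_mul_const hgap).eventually_ge_atTop _
  obtain ⟨t, ht, hlarge⟩ := large.exists
  refine ⟨t • x, ?_⟩
  suffices capraConjL0 (t • x) ≤ t * ‖x‖ - l0 x by
    rw [capra_smul_self]
    linarith
  refine capraConjL0_le fun l _ => ?_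
  rw [gaugeNorm_smul ht]
  rcases lt_or_ge l (l0 x) with hl | hl
  · linarith [hlarge ⟨l, hl⟩, (Nat.cast_nonneg l : (0 : ℝ) ≤ l)]
  · linarith [mul_le_mul_of_nonneg_left (gaugeNorm_le_norm l x) ht,
      (Nat.cast_le.mpr hl : (l0 x : ℝ) ≤ l)]

theorem l0_eq_capra_biconjugate_general (d : ℕ) (x : EuclideanSpace ℝ (Fin d)) :
    (⨆ y : EuclideanSpace ℝ (Fin d),
        (capra x y - ⨆ l : Fin (d + 1), (gaugeNorm (l : ℕ) y - ((l : ℕ) : ℝ)))) =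
      (l0 x : ℝ) := by
  change (⨆ y, capra x y - capraConjL0 y) = (l0 x : ℝ)
  have hbdd : BddAbove (Set.range fun y => capra x y - capraConjL0 y) :=
    ⟨l0 x, Set.forall_mem_range.mpr (capra_sub_capraConjL0_le x)⟩
  obtain ⟨y, hy⟩ := exists_l0_le_capra_sub_capraConjL0 x
  exact le_antisymm (ciSup_le (capra_sub_capraConjL0_le x)) (le_ciSup_of_le hbdd y hy)

/-- the ℓ₀ pseudonorm equals its Capra biconjugate (ℓ₀ is Capra-convex):
`sup_y (¢(x,y) − max_{0 ≤ l ≤ d}(‖y‖_(l) − l)) = ℓ₀(x)`. -/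
theorem l0_eq_capra_biconjugate (d : ℕ) (hd : 1 ≤ d) (x : EuclideanSpace ℝ (Fin d)) :
    (⨆ y : EuclideanSpace ℝ (Fin d),
        (capra x y - ⨆ l : Fin (d + 1), (gaugeNorm (l : ℕ) y - ((l : ℕ) : ℝ)))) =
      (l0 x : ℝ) :=
  l0_eq_capra_biconjugate_general d x
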